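/- arXiv:0908.2564 — 2 statements merged into one kernel-verified Lean document; each statement's English description precedes it below -/
import Mathlib

section
/- Let φ, h₁, h₃ : ℝ² → ℝ be smooth, let h₂ : ℝ → ℝ be smooth with h₂(y) ≠ 0 for every y, and for x ≠ 0 set l(x,y) = √( x²·h₁(x,y)² + (h₂(y) + x·h₃(x,y))² / (x²·e^{2φ(x,y)}) ) and v(x,y) = (sign(x)/l(x,y)) · ( −(h₂(y) + x·h₃(x,y)) / (x·e^{φ(x,y)}) , x·h₁(x,y) ) ∈ ℝ². Then for every y₀ ∈ ℝ, v(x,y) converges to ( −h₂(y₀)/|h₂(y₀)| , 0 ) as (x,y) → (0,y₀) with x ≠ 0; in particular v extends continuously to the line {x = 0}. -/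
open Filter

/-- Continuous extension of the section `σ` across the singular locus, away from
tangency points, in the normal form (F2). With
`l(x,y) = √( x²h₁(x,y)² + (h₂(y) + x h₃(x,y))²/(x² e^{2φ(x,y)}) )` and
`v(x,y) = (sign x / l) · ( −(h₂(y) + x h₃(x,y))/(x e^{φ(x,y)}), x h₁(x,y) )`,
the map `v` tends to `(−h₂(y₀)/|h₂(y₀)|, 0)` as `(x,y) → (0,y₀)` with `x ≠ 0`. -/
theorem section_extends_at_grushin_points
    (φ h₁ h₃ : ℝ × ℝ → ℝ) (h₂ : ℝ → ℝ)
    (hφ : ContDiff ℝ (⊤ : ℕ∞) φ) (hh₁ : ContDiff ℝ (⊤ : ℕ∞) h₁) (hh₃ : ContDiff ℝ (⊤ : ℕ∞) h₃)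
    (hh₂ : ContDiff ℝ (⊤ : ℕ∞) h₂) (hne : ∀ y : ℝ, h₂ y ≠ 0) (y₀ : ℝ) :
    Tendsto (fun p : ℝ × ℝ =>
        (Real.sign p.1 /
            Real.sqrt (p.1 ^ 2 * (h₁ p) ^ 2 +
              (h₂ p.2 + p.1 * h₃ p) ^ 2 / (p.1 ^ 2 * Real.exp (2 * φ p))) *
            (-(h₂ p.2 + p.1 * h₃ p) / (p.1 * Real.exp (φ p))),
          Real.sign p.1 /
            Real.sqrt (p.1 ^ 2 * (h₁ p) ^ 2 +
              (h₂ p.2 + p.1 * h₃ p) ^ 2 / (p.1 ^ 2 * Real.exp (2 * φ p))) *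
            (p.1 * h₁ p)))
      (nhdsWithin ((0 : ℝ), y₀) {p : ℝ × ℝ | p.1 ≠ 0})
      (nhds (-(h₂ y₀) / |h₂ y₀|, 0)) := by
  set C : ℝ × ℝ → ℝ := fun p => h₂ p.2 + p.1 * h₃ p with hCdef
  set D : ℝ × ℝ → ℝ := fun p =>
    Real.sqrt (p.1 ^ 4 * (h₁ p) ^ 2 * Real.exp (φ p) ^ 2 + (C p) ^ 2) with hDdef
  have hCcont : Continuous C :=
    (hh₂.continuous.comp continuous_snd).add (continuous_fst.mul hh₃.continuous)
  have hDcont : Continuous D := by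
    apply Continuous.sqrt
    exact (((continuous_fst.pow 4).mul (hh₁.continuous.pow 2)).mul
      ((Real.continuous_exp.comp hφ.continuous).pow 2)).add (hCcont.pow 2)
  have hC0 : C (0, y₀) = h₂ y₀ := by simp [hCdef]
  have hD0 : D (0, y₀) = |h₂ y₀| := by
    simp [hDdef, hC0, Real.sqrt_sq_eq_abs]
  have hD0ne : D (0, y₀) ≠ 0 := by rw [hD0]; exact abs_ne_zero.2 (hne y₀)
  have hg : Tendsto (fun p : ℝ × ℝ =>
      (-(C p) / D p, p.1 ^ 2 * h₁ p * Real.exp (φ p) / D p))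
      (nhds ((0 : ℝ), y₀)) (nhds (-(h₂ y₀) / |h₂ y₀|, 0)) := by
    have h1 : ContinuousAt (fun p : ℝ × ℝ => -(C p) / D p) (0, y₀) :=
      (hCcont.neg.continuousAt).div hDcont.continuousAt hD0ne
    have h2 : ContinuousAt (fun p : ℝ × ℝ =>
        p.1 ^ 2 * h₁ p * Real.exp (φ p) / D p) (0, y₀) := by
      exact ContinuousAt.div
        (((continuous_fst.pow 2).mul hh₁.continuous).mul
          (Real.continuous_exp.comp hφ.continuous)).continuousAt
        hDcont.continuousAt hD0ne
    have := (ContinuousAt.prodMk h1 h2).tendsto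
    simpa [hC0, hD0] using this
  refine Tendsto.congr' ?_ (hg.mono_left nhdsWithin_le_nhds)
  filter_upwards [self_mem_nhdsWithin] with p hp
  have hx : p.1 ≠ 0 := hp
  have hE : (0 : ℝ) < Real.exp (φ p) := Real.exp_pos _
  have hxE : p.1 * Real.exp (φ p) ≠ 0 := mul_ne_zero hx hE.ne'
  have he2 : Real.exp (2 * φ p) = Real.exp (φ p) ^ 2 := by
    rw [two_mul, Real.exp_add, sq]
  have hsq : Real.sqrt (p.1 ^ 2 * (h₁ p) ^ 2 +
      (C p) ^ 2 / (p.1 ^ 2 * Real.exp (2 * φ p))) =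
      D p / (|p.1| * Real.exp (φ p)) := by
    rw [he2]
    have heq : p.1 ^ 2 * (h₁ p) ^ 2 + (C p) ^ 2 / (p.1 ^ 2 * Real.exp (φ p) ^ 2) =
        (p.1 ^ 4 * (h₁ p) ^ 2 * Real.exp (φ p) ^ 2 + (C p) ^ 2) /
          (p.1 ^ 2 * Real.exp (φ p) ^ 2) := by
      field_simp
    rw [heq, Real.sqrt_div (by positivity),
      show p.1 ^ 2 * Real.exp (φ p) ^ 2 = (|p.1| * Real.exp (φ p)) ^ 2 by
        rw [mul_pow, sq_abs],
      Real.sqrt_sq (by positivity)]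
  have hsign : Real.sign p.1 * |p.1| = p.1 := by
    rcases hx.lt_or_gt with h | h
    · rw [Real.sign_of_neg h, abs_of_neg h]; ring
    · rw [Real.sign_of_pos h, abs_of_pos h]; ring
  have key : Real.sign p.1 / (D p / (|p.1| * Real.exp (φ p))) =
      p.1 * Real.exp (φ p) / D p := by
    rw [div_div_eq_mul_div, ← mul_assoc, hsign]
  refine Prod.ext ?_ ?_ <;> simp only
  · symm
    show Real.sign p.1 / _ * (-(C p) / (p.1 * Real.exp (φ p))) = -(C p) / D p
    rw [hsq, key, div_mul_div_comm, mul_comm (D p) (p.1 * Real.exp (φ p)),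
      mul_div_mul_left _ _ hxE]
  · symm
    show Real.sign p.1 / _ * (p.1 * h₁ p) = p.1 ^ 2 * h₁ p * Real.exp (φ p) / D p
    rw [hsq, key, div_mul_eq_mul_div]
    ring_nf
end

section
/- Let h₁ ≠ 0, h₃, ξ ∈ ℝ, ψ > 0, and α ∈ {−1, 1}, and let ã(t) = −arctan( h₁·e^{ξ}·sin t / ( h₃·sin t + 2α·ψ·h₁·cos t ) ). Then the degree count of ã at the regular value 0, namely the sum over all t ∈ [0, 2π) with ã(t) = 0 of the sign of ã′(t), equals sign(ã′(0)) + sign(ã′(π)) = −2α. -/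
/-- The degree count of the limiting angle function at the regular value `0`:
for `ã(t) = −arctan( h₁ e^{ξ} sin t / ( h₃ sin t + 2αψh₁ cos t ) )` with
`h₁ ≠ 0`, `ψ > 0` and `α = ±1`, the sum over all `t ∈ [0, 2π)` (in the domain
of `ã`, i.e. where the denominator is nonzero) with `ã(t) = 0` of `sign(ã′(t))`
equals `sign(ã′(0)) + sign(ã′(π)) = −2α`. -/
theorem degree_count_eq_neg_two_alpha
    (h₁ h₃ ξ ψ α : ℝ) (hh₁ : h₁ ≠ 0) (hψ : 0 < ψ) (hα : α = 1 ∨ α = -1)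
    (a : ℝ → ℝ)
    (ha : a = fun t => -Real.arctan (h₁ * Real.exp ξ * Real.sin t /
      (h₃ * Real.sin t + 2 * α * ψ * h₁ * Real.cos t))) :
    (∑ᶠ t ∈ {t : ℝ | t ∈ Set.Ico 0 (2 * Real.pi) ∧
        h₃ * Real.sin t + 2 * α * ψ * h₁ * Real.cos t ≠ 0 ∧ a t = 0},
      Real.sign (deriv a t)) =
        Real.sign (deriv a 0) + Real.sign (deriv a Real.pi) ∧
    Real.sign (deriv a 0) + Real.sign (deriv a Real.pi) = -2 * α := by
  subst ha
  have hπ := Real.pi_pos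
  have hα0 : α ≠ 0 := by rcases hα with h | h <;> rw [h] <;> norm_num
  have hc : h₁ * Real.exp ξ ≠ 0 := mul_ne_zero hh₁ (Real.exp_ne_zero ξ)
  have hk : 2 * α * ψ * h₁ ≠ 0 :=
    mul_ne_zero (mul_ne_zero (mul_ne_zero two_ne_zero hα0) hψ.ne') hh₁
  -- derivative at points where sin t = 0
  have key : ∀ t : ℝ, Real.sin t = 0 →
      deriv (fun t => -Real.arctan (h₁ * Real.exp ξ * Real.sin t /
        (h₃ * Real.sin t + 2 * α * ψ * h₁ * Real.cos t))) t
        = -(Real.exp ξ / (2 * α * ψ)) := by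
    intro t ht
    have hcos : Real.cos t * Real.cos t = 1 := by
      have h2 := Real.sin_sq_add_cos_sq t
      nlinarith [h2]
    have hcne : Real.cos t ≠ 0 := by
      intro h0; rw [h0] at hcos; norm_num at hcos
    have hv : h₃ * Real.sin t + 2 * α * ψ * h₁ * Real.cos t ≠ 0 := by
      rw [ht]
      simpa using mul_ne_zero hk hcne
    have hu : HasDerivAt (fun s => h₁ * Real.exp ξ * Real.sin s)
        (h₁ * Real.exp ξ * Real.cos t) t := (Real.hasDerivAt_sin t).const_mul _
    have hv' : HasDerivAt (fun s => h₃ * Real.sin s + 2 * α * ψ * h₁ * Real.cos s)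
        (h₃ * Real.cos t + 2 * α * ψ * h₁ * (-Real.sin t)) t :=
      ((Real.hasDerivAt_sin t).const_mul _).add ((Real.hasDerivAt_cos t).const_mul _)
    have hf : HasDerivAt (fun s => h₁ * Real.exp ξ * Real.sin s /
        (h₃ * Real.sin s + 2 * α * ψ * h₁ * Real.cos s))
        ((h₁ * Real.exp ξ * Real.cos t * (h₃ * Real.sin t + 2 * α * ψ * h₁ * Real.cos t)
          - h₁ * Real.exp ξ * Real.sin t * (h₃ * Real.cos t + 2 * α * ψ * h₁ * (-Real.sin t)))
          / (h₃ * Real.sin t + 2 * α * ψ * h₁ * Real.cos t) ^ 2) t := hu.div hv' hv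
    have hg := ((Real.hasDerivAt_arctan (h₁ * Real.exp ξ * Real.sin t /
        (h₃ * Real.sin t + 2 * α * ψ * h₁ * Real.cos t))).comp t hf).neg
    have hg2 : HasDerivAt (fun t => -Real.arctan (h₁ * Real.exp ξ * Real.sin t /
        (h₃ * Real.sin t + 2 * α * ψ * h₁ * Real.cos t))) _ t := hg
    rw [hg2.deriv, ht]
    have hkc : 2 * α * ψ * h₁ * Real.cos t ≠ 0 := mul_ne_zero hk hcne
    field_simp
    nlinarith [hcos, Real.exp_pos ξ, sq_nonneg (Real.cos t)]
  have hd0 := key 0 Real.sin_zero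
  have hdπ := key Real.pi Real.sin_pi
  -- sign of the derivative
  have hsign : Real.sign (-(Real.exp ξ / (2 * α * ψ))) = -α := by
    rcases hα with h | h <;> rw [h]
    · have hneg : -(Real.exp ξ / (2 * 1 * ψ)) < 0 := by
        have : 0 < Real.exp ξ / (2 * 1 * ψ) := by positivity
        linarith
      rw [Real.sign_of_neg hneg]
    · have hpos : 0 < -(Real.exp ξ / (2 * (-1) * ψ)) := by
        have heq : -(Real.exp ξ / (2 * (-1) * ψ)) = Real.exp ξ / (2 * ψ) := by ring
        rw [heq]; positivity
      rw [Real.sign_of_pos hpos]; norm_num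
  -- the set of zeros is {0, π}
  have hset : {t : ℝ | t ∈ Set.Ico 0 (2 * Real.pi) ∧
      h₃ * Real.sin t + 2 * α * ψ * h₁ * Real.cos t ≠ 0 ∧
      (fun t => -Real.arctan (h₁ * Real.exp ξ * Real.sin t /
        (h₃ * Real.sin t + 2 * α * ψ * h₁ * Real.cos t))) t = 0}
      = ({0, Real.pi} : Set ℝ) := by
    ext t
    simp only [Set.mem_setOf_eq, Set.mem_Ico, Set.mem_insert_iff, Set.mem_singleton_iff]
    constructor
    · rintro ⟨⟨ht0, ht2⟩, hv, haz⟩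
      simp only [neg_eq_zero, Real.arctan_eq_zero_iff] at haz
      have hnum : h₁ * Real.exp ξ * Real.sin t = 0 := by
        rcases div_eq_zero_iff.1 haz with h | h
        · exact h
        · exact absurd h hv
      have hsin : Real.sin t = 0 := by
        rcases mul_eq_zero.1 hnum with h | h
        · exact absurd h hc
        · exact h
      obtain ⟨n, hn⟩ := Real.sin_eq_zero_iff.1 hsin
      have hn0 : 0 ≤ n := by
        by_contra hneg
        push_neg at hneg
        have : (n : ℝ) ≤ -1 := by exact_mod_cast (by omega : n ≤ (-1 : ℤ))
        nlinarith
      have hn2 : n < 2 := by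
        by_contra hge
        push_neg at hge
        have : (2 : ℝ) ≤ (n : ℝ) := by exact_mod_cast hge
        nlinarith
      interval_cases n
      · left; simpa using hn.symm
      · right; simpa using hn.symm
    · rintro (rfl | rfl)
      · refine ⟨⟨le_refl 0, by linarith⟩, ?_, ?_⟩
        · simpa using hk
        · simp
      · refine ⟨⟨hπ.le, by linarith⟩, ?_, ?_⟩
        · simp only [Real.sin_pi, Real.cos_pi, mul_zero, zero_add, mul_neg_one, mul_neg,
            ne_eq, neg_eq_zero]
          simpa using hk
        · simp
  constructor
  · rw [hset]
    exact finsum_mem_pair (by linarith : (0 : ℝ) ≠ Real.pi)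
  · rw [hd0, hdπ, hsign]; ring
end
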